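/- arXiv:1309.7145 — 3 statements merged into one kernel-verified Lean document; each statement's English description precedes it below -/
import Mathlib

section
/- Let A be a cDFA over alphabet Σ with state set Q, start state q0 and transition function δ, let D₁,…,Dₙ ⊆ Σ be nonempty finite domains, and let D_N ⊆ ℕ be a nonempty finite domain. Fix i ∈ [1,n] and ℓ ∈ Dᵢ, and define Min(i,ℓ) = min over q ∈ Q of preMin(i−1,q) + inc + sufMin(i+1,q′), where δ(q,ℓ) = (q′,inc). Then there exist a domain-consistent string σ with σᵢ = ℓ and a value v ∈ D_N with cost(q0,σ) ≤ v if and only if Min(i,ℓ) ≤ max(D_N). -/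
/-! Cutting a string at position `i` splits its cost into the cost of the prefix, which ends in
some state `q`, the increment of the `ℓ`-step out of `q`, and the cost of the suffix. Hence
`Min(i, ℓ)` is a lower bound on the cost of every domain-consistent string with `σᵢ = ℓ`, and
when it is finite it is attained: glue a cheapest prefix into the minimising `q` to `ℓ` and a
cheapest suffix (infima in `ℕ∞` and `ℕ` are attained, and the suffix domains are nonempty).
Some `v ∈ D_N` bounds the cost of such a string exactly when `max D_N` does. -/

/-- A counter-DFA over state type `Q` and alphabet `σ`: a start state and a total
transition function returning the successor state and the counter increment. -/
structure CDFA (Q : Type*) (σ : Type*) where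
  q0 : Q
  δ : Q → σ → Q × ℕ

namespace CDFA

variable {Q σ : Type*}

/-- The state reached from `q` after consuming a string. -/
def run (A : CDFA Q σ) : Q → List σ → Q
  | q, [] => q
  | q, ℓ :: w => A.run (A.δ q ℓ).1 w

/-- The total counter increase from state `q` upon consuming a string. -/
def cost (A : CDFA Q σ) : Q → List σ → ℕ
  | _, [] => 0
  | q, ℓ :: w => (A.δ q ℓ).2 + A.cost (A.δ q ℓ).1 w

end CDFA

namespace CDFA

variable {Q σ : Type*}

/-- `preMin A D i hi q` : the minimum cost (in `ℕ ∪ {∞}`) of a domain-consistent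
prefix string of length `i` leading from the start state to state `q`
(`∞` if no such string reaches `q`). -/
noncomputable def preMin (A : CDFA Q σ) {n : ℕ} (D : Fin n → Finset σ)
    (i : ℕ) (hi : i ≤ n) (q : Q) : ℕ∞ :=
  sInf {c : ℕ∞ | ∃ s : Fin i → σ, (∀ j, s j ∈ D (Fin.castLE hi j)) ∧
    A.run A.q0 (List.ofFn s) = q ∧ (A.cost A.q0 (List.ofFn s) : ℕ∞) = c}

/-- `preMax A D i hi q` : the maximum cost (in `ℕ ∪ {−∞}`) of a domain-consistent
prefix string of length `i` leading from the start state to state `q`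
(`−∞` if no such string reaches `q`). -/
noncomputable def preMax (A : CDFA Q σ) {n : ℕ} (D : Fin n → Finset σ)
    (i : ℕ) (hi : i ≤ n) (q : Q) : WithBot ℕ :=
  sSup {c : WithBot ℕ | ∃ s : Fin i → σ, (∀ j, s j ∈ D (Fin.castLE hi j)) ∧
    A.run A.q0 (List.ofFn s) = q ∧ (A.cost A.q0 (List.ofFn s) : WithBot ℕ) = c}

/-- `sufMin A D i q` : the minimum cost of a domain-consistent suffix string for
positions `i, …, n−1` (0-based), starting from state `q`. -/
noncomputable def sufMin (A : CDFA Q σ) {n : ℕ} (D : Fin n → Finset σ)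
    (i : ℕ) (q : Q) : ℕ :=
  sInf {c : ℕ | ∃ s : Fin (n - i) → σ,
    (∀ j : Fin (n - i), s j ∈ D ⟨i + j.val, by have := j.isLt; omega⟩) ∧
    A.cost q (List.ofFn s) = c}

/-- `sufMax A D i q` : the maximum cost of a domain-consistent suffix string for
positions `i, …, n−1` (0-based), starting from state `q`. -/
noncomputable def sufMax (A : CDFA Q σ) {n : ℕ} (D : Fin n → Finset σ)
    (i : ℕ) (q : Q) : ℕ :=
  sSup {c : ℕ | ∃ s : Fin (n - i) → σ,
    (∀ j : Fin (n - i), s j ∈ D ⟨i + j.val, by have := j.isLt; omega⟩) ∧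
    A.cost q (List.ofFn s) = c}

end CDFA

namespace Fin

variable {α : Type*} {n : ℕ}

def dropSucc (i : Fin n) (s : Fin n → α) : Fin (n - (i + 1)) → α :=
  fun j ↦ s ⟨i + 1 + j, by omega⟩

theorem ofFn_dropSucc (i : Fin n) (s : Fin n → α) :
    List.ofFn (dropSucc i s) = (List.ofFn s).drop (i + 1) :=
  List.ext_getElem (by simp) fun j _ _ ↦ by simp [dropSucc]

theorem ofFn_eq_take_append_cons_dropSucc (i : Fin n) (s : Fin n → α) :
    List.ofFn s = List.ofFn (take i i.isLt.le s) ++ s i :: List.ofFn (dropSucc i s) := by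
  have hi : i.val < (List.ofFn s).length := by simp
  rw [ofFn_take_eq_take_ofFn, ofFn_dropSucc, ← List.getElem_ofFn (h := hi),
    ← List.drop_eq_getElem_cons hi, List.take_append_drop]

def splice (i : Fin n) (a : α) (pre : Fin i → α) (suf : Fin (n - (i + 1)) → α) :
    Fin n → α := fun j ↦
  if h : j.val < i then pre ⟨j, h⟩
  else if _ : j.val = i then a
  else suf ⟨j - (i + 1), by have := j.isLt; omega⟩

variable (i : Fin n) (a : α) (pre : Fin i → α) (suf : Fin (n - (i + 1)) → α)

@[simp]
theorem splice_self : splice i a pre suf i = a := by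
  simp [splice]

@[simp]
theorem take_splice : take i i.isLt.le (splice i a pre suf) = pre := by
  funext j
  simp [take, splice]

@[simp]
theorem dropSucc_splice : dropSucc i (splice i a pre suf) = suf := by
  funext j
  simp only [dropSucc, splice]
  rw [dif_neg (by omega), dif_neg (by omega)]
  congr
  omega

theorem splice_mem {P : Fin n → α → Prop} (hpre : ∀ j, P (castLE i.isLt.le j) (pre j))
    (ha : P i a) (hsuf : ∀ j : Fin (n - (i + 1)), P ⟨i + 1 + j, by omega⟩ (suf j))
    (j : Fin n) :
    P j (splice i a pre suf j) := by
  unfold splice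
  split_ifs with hlt heq
  · exact hpre ⟨j, hlt⟩
  · exact (Fin.ext heq : j = i) ▸ ha
  · simpa [show i + 1 + (j - (i + 1)) = j.val by omega]
      using hsuf ⟨j - (i + 1), by have := j.isLt; omega⟩

end Fin

namespace CDFA

variable {Q σ : Type*} (A : CDFA Q σ)

theorem cost_append (q : Q) (u w : List σ) :
    A.cost q (u ++ w) = A.cost q u + A.cost (A.run q u) w := by
  induction u generalizing q with
  | nil => simp [cost, run]
  | cons a u ih => simp only [List.cons_append, cost, run, ih, Nat.add_assoc]

theorem cost_ofFn_eq_take_add_step_add_dropSucc {n : ℕ} (p : Q) (s : Fin n → σ) (i : Fin n) :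
    let q := A.run p (List.ofFn (Fin.take i i.isLt.le s))
    A.cost p (List.ofFn s) = A.cost p (List.ofFn (Fin.take i i.isLt.le s)) + (A.δ q (s i)).2 +
      A.cost (A.δ q (s i)).1 (List.ofFn (Fin.dropSucc i s)) := by
  rw [Fin.ofFn_eq_take_append_cons_dropSucc i s, cost_append, cost]
  exact (Nat.add_assoc ..).symm

variable {n : ℕ} (D : Fin n → Finset σ)

theorem preMin_le_cost {i : ℕ} (hi : i ≤ n) {s : Fin i → σ}
    (hs : ∀ j, s j ∈ D (Fin.castLE hi j)) :
    A.preMin D i hi (A.run A.q0 (List.ofFn s)) ≤ A.cost A.q0 (List.ofFn s) :=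
  sInf_le ⟨s, hs, rfl, rfl⟩

theorem exists_cost_eq_preMin {i : ℕ} (hi : i ≤ n) {q : Q} (hq : A.preMin D i hi q ≠ ⊤) :
    ∃ s : Fin i → σ, (∀ j, s j ∈ D (Fin.castLE hi j)) ∧ A.run A.q0 (List.ofFn s) = q ∧
      A.cost A.q0 (List.ofFn s) = A.preMin D i hi q := by
  rw [preMin] at hq ⊢
  obtain ⟨c, hc, -⟩ := not_forall₂.1 (mt sInf_eq_top.2 hq)
  exact csInf_mem ⟨c, hc⟩

theorem sufMin_le_cost {i : ℕ} (q : Q) {s : Fin (n - i) → σ}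
    (hs : ∀ j : Fin (n - i), s j ∈ D ⟨i + j, by omega⟩) :
    A.sufMin D i q ≤ A.cost q (List.ofFn s) :=
  Nat.sInf_le ⟨s, hs, rfl⟩

theorem exists_cost_eq_sufMin (hD : ∀ j, (D j).Nonempty) (i : ℕ) (q : Q) :
    ∃ s : Fin (n - i) → σ, (∀ j : Fin (n - i), s j ∈ D ⟨i + j, by omega⟩) ∧
      A.cost q (List.ofFn s) = A.sufMin D i q := by
  rw [sufMin]
  exact Nat.sInf_mem (s := {c | ∃ s : Fin (n - i) → σ,
    (∀ j : Fin (n - i), s j ∈ D ⟨i + j, by omega⟩) ∧ A.cost q (List.ofFn s) = c})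
    ⟨_, _, fun j ↦ (hD _).choose_spec, rfl⟩

/-- The paper's `Min(i, ℓ)`. Positions are 0-based, so the paper's `preMin(i−1, q)` and
`sufMin(i+1, q′)` are `preMin D i` and `sufMin D (i + 1)` here. -/
noncomputable def minCostThrough (i : Fin n) (ℓ : σ) : ℕ∞ :=
  ⨅ q : Q, A.preMin D i i.isLt.le q + ((A.δ q ℓ).2 : ℕ∞) +
    (A.sufMin D (i + 1) (A.δ q ℓ).1 : ℕ∞)

theorem minCostThrough_le_cost {s : Fin n → σ} (hs : ∀ j, s j ∈ D j) (i : Fin n) :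
    A.minCostThrough D i (s i) ≤ A.cost A.q0 (List.ofFn s) := by
  set q := A.run A.q0 (List.ofFn (Fin.take i i.isLt.le s))
  calc A.minCostThrough D i (s i)
      ≤ A.preMin D i i.isLt.le q + (A.δ q (s i)).2 + A.sufMin D (i + 1) (A.δ q (s i)).1 :=
        iInf_le _ q
    _ ≤ A.cost A.q0 (List.ofFn (Fin.take i i.isLt.le s)) + (A.δ q (s i)).2 +
          A.cost (A.δ q (s i)).1 (List.ofFn (Fin.dropSucc i s)) := by
        gcongr
        · exact A.preMin_le_cost D _ fun j ↦ hs _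
        · exact_mod_cast A.sufMin_le_cost D _ fun j ↦ hs _
    _ = A.cost A.q0 (List.ofFn s) := by
        rw [A.cost_ofFn_eq_take_add_step_add_dropSucc A.q0 s i]
        push_cast
        rfl

theorem exists_cost_eq_minCostThrough (hD : ∀ j, (D j).Nonempty) {i : Fin n} {ℓ : σ}
    (hℓ : ℓ ∈ D i) (hfin : A.minCostThrough D i ℓ ≠ ⊤) :
    ∃ s : Fin n → σ, (∀ j, s j ∈ D j) ∧ s i = ℓ ∧
      (A.cost A.q0 (List.ofFn s) : ℕ∞) = A.minCostThrough D i ℓ := by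
  have : Nonempty Q := ⟨A.q0⟩
  obtain ⟨q, hq⟩ := ciInf_mem fun q ↦ A.preMin D i i.isLt.le q + ((A.δ q ℓ).2 : ℕ∞) +
    (A.sufMin D (i + 1) (A.δ q ℓ).1 : ℕ∞)
  have hpre : A.preMin D i i.isLt.le q ≠ ⊤ := fun h ↦
    hfin (by simp [minCostThrough, ← hq, h])
  obtain ⟨pre, hpre_mem, hrun, hpre_cost⟩ := A.exists_cost_eq_preMin D _ hpre
  obtain ⟨suf, hsuf_mem, hsuf_cost⟩ := A.exists_cost_eq_sufMin D hD (i + 1) (A.δ q ℓ).1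
  refine ⟨Fin.splice i ℓ pre suf, Fin.splice_mem (P := fun j a ↦ a ∈ D j) i ℓ pre suf
    hpre_mem hℓ hsuf_mem, Fin.splice_self .., ?_⟩
  rw [A.cost_ofFn_eq_take_add_step_add_dropSucc, Fin.take_splice, Fin.dropSucc_splice,
    Fin.splice_self, hrun, minCostThrough, ← hq]
  push_cast
  rw [hpre_cost, hsuf_cost]

end CDFA

theorem cAutomatonAtMost_value_support_general {Q σ : Type*}
    (A : CDFA Q σ) {n : ℕ} (D : Fin n → Finset σ) (hD : ∀ j, (D j).Nonempty)
    (DN : Finset ℕ) (hDN : DN.Nonempty) (i : Fin n) (ℓ : σ) (hℓ : ℓ ∈ D i) :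
    (∃ s : Fin n → σ, (∀ j, s j ∈ D j) ∧ s i = ℓ ∧
        ∃ v ∈ DN, A.cost A.q0 (List.ofFn s) ≤ v) ↔
      (⨅ q : Q, A.preMin D i.val i.isLt.le q + ((A.δ q ℓ).2 : ℕ∞) +
          (A.sufMin D (i.val + 1) (A.δ q ℓ).1 : ℕ∞)) ≤ (DN.max' hDN : ℕ∞) := by
  change _ ↔ A.minCostThrough D i ℓ ≤ _
  refine ⟨?_, fun h ↦ ?_⟩
  · rintro ⟨s, hs, rfl, v, hv, hcost⟩
    calc A.minCostThrough D i (s i)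
        ≤ A.cost A.q0 (List.ofFn s) := A.minCostThrough_le_cost D hs i
      _ ≤ DN.max' hDN := by exact_mod_cast hcost.trans (DN.le_max' v hv)
  · obtain ⟨s, hs, hsi, hcost⟩ :=
      A.exists_cost_eq_minCostThrough D hD hℓ (ne_top_of_le_ne_top (by simp) h)
    exact ⟨s, hs, hsi, _, DN.max'_mem hDN, by exact_mod_cast hcost.trans_le h⟩

/-- Domain-consistency filtering for `cAutomatonAtMost`: a value `ℓ ∈ Dᵢ` appears in a
solution iff `Min(i,ℓ) = min_{q ∈ Q} (preMin(i−1,q) + inc + sufMin(i+1,q′))`, with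
`δ(q,ℓ) = (q′,inc)`, is at most `max(D_N)` (positions 0-based). -/
theorem cAutomatonAtMost_value_support {Q σ : Type*} [Fintype Q] [Fintype σ]
    (A : CDFA Q σ) {n : ℕ} (D : Fin n → Finset σ) (hD : ∀ j, (D j).Nonempty)
    (DN : Finset ℕ) (hDN : DN.Nonempty) (i : Fin n) (ℓ : σ) (hℓ : ℓ ∈ D i) :
    (∃ s : Fin n → σ, (∀ j, s j ∈ D j) ∧ s i = ℓ ∧
        ∃ v ∈ DN, A.cost A.q0 (List.ofFn s) ≤ v) ↔
      (⨅ q : Q, A.preMin D i.val i.isLt.le q + ((A.δ q ℓ).2 : ℕ∞) +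
          (A.sufMin D (i.val + 1) (A.δ q ℓ).1 : ℕ∞)) ≤ (DN.max' hDN : ℕ∞) :=
  cAutomatonAtMost_value_support_general A D hD DN hDN i ℓ hℓ
end

section
/- Let A be a cDFA over alphabet Σ with state set Q, start state q0 and transition function δ, let D₁,…,Dₙ ⊆ Σ be nonempty finite domains, and let D_N ⊆ ℕ be a nonempty finite domain. Fix i ∈ [1,n] and ℓ ∈ Dᵢ, and define Max(i,ℓ) = max over q ∈ Q with preMax(i−1,q) ≠ −∞ of preMax(i−1,q) + inc + sufMax(i+1,q′), where δ(q,ℓ) = (q′,inc). Then there exist a domain-consistent string σ with σᵢ = ℓ and a value v ∈ D_N with cost(q0,σ) ≥ v if and only if Max(i,ℓ) ≥ min(D_N). -/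
/-!
A domain-consistent string with `σᵢ = ℓ` splits as a prefix reaching some state `q`, the letter
`ℓ`, and a suffix read from `(δ q ℓ).1`; its cost is the sum of the three costs. Each piece is
bounded by `preMax`, the increment and `sufMax` respectively, which gives one direction. For the
other, the maxima are attained (the domains are finite and nonempty), so splicing a maximal
prefix, `ℓ`, and a maximal suffix yields a string whose cost is exactly `Max(i, ℓ)`.
-/

namespace Fin

variable {α : Type*} {n : ℕ}

def suffixAfter (s : Fin n → α) (i : Fin n) : Fin (n - (i + 1)) → α :=
  fun j => s ⟨i + 1 + j, by have := j.isLt; omega⟩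

def spliceAt (i : Fin n) (u : Fin i → α) (a : α) (w : Fin (n - (i + 1)) → α) :
    Fin n → α :=
  fun j => if h : j < i then u ⟨j, h⟩ else if h' : j = i then a
    else w ⟨j - (i + 1), by have := j.isLt; have := Fin.val_ne_of_ne h'; omega⟩

variable (i : Fin n) (u : Fin i → α) (a : α) (w : Fin (n - (i + 1)) → α)

theorem spliceAt_self : spliceAt i u a w i = a := by
  simp [spliceAt]

theorem take_spliceAt : take i i.isLt.le (spliceAt i u a w) = u :=
  funext fun j => dif_pos j.isLt

theorem suffixAfter_spliceAt : suffixAfter (spliceAt i u a w) i = w := by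
  funext j
  simp only [suffixAfter, spliceAt]
  rw [dif_neg (by simp [Fin.lt_def]; omega), dif_neg (by simp [Fin.ext_iff]; omega)]
  congr 2
  omega

theorem ofFn_eq_take_append_cons (s : Fin n → α) :
    List.ofFn s = List.ofFn (take i i.isLt.le s) ++ s i :: List.ofFn (suffixAfter s i) := by
  apply List.ext_getElem
  · simp; omega
  · intro k h1 h2
    rw [List.getElem_ofFn]
    rcases lt_trichotomy k i with h | rfl | h
    · rw [List.getElem_append_left (by simpa using h), List.getElem_ofFn]
      rfl
    · simp
    · rw [List.getElem_append_right (by simp; omega), List.getElem_cons,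
        dif_neg (by simp; omega), List.getElem_ofFn]
      simp only [suffixAfter, List.length_ofFn]
      congr 2
      omega

theorem ofFn_spliceAt : List.ofFn (spliceAt i u a w) = List.ofFn u ++ a :: List.ofFn w := by
  rw [ofFn_eq_take_append_cons i, take_spliceAt, spliceAt_self, suffixAfter_spliceAt]

theorem spliceAt_mem {t : Fin n → Set α} (hu : ∀ j, u j ∈ t (castLE i.isLt.le j))
    (ha : a ∈ t i) (hw : ∀ j : Fin (n - (i + 1)), w j ∈ t ⟨i + 1 + j, by omega⟩)
    (j : Fin n) : spliceAt i u a w j ∈ t j := by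
  simp only [spliceAt]
  split_ifs with hlt heq
  · exact hu ⟨j, hlt⟩
  · exact heq ▸ ha
  · convert hw _ using 2
    ext
    simp only
    omega

end Fin

theorem Set.finite_setOf_exists_forall_mem {ι α β : Type*} [Finite ι] (t : ι → Finset α)
    (f : (ι → α) → β) : {b | ∃ s : ι → α, (∀ j, s j ∈ t j) ∧ f s = b}.Finite :=
  ((Set.Finite.pi fun j => (t j).finite_toSet).image f).subset
    fun _ ⟨s, hs, hb⟩ => ⟨s, fun j _ => hs j, hb⟩

namespace CDFA

variable {Q σ : Type*} (A : CDFA Q σ)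

theorem cost_append_cons (q : Q) (u : List σ) (a : σ) (w : List σ) :
    A.cost q (u ++ a :: w) =
      A.cost q u + (A.δ (A.run q u) a).2 + A.cost (A.δ (A.run q u) a).1 w := by
  rw [cost_append, cost, add_assoc]

variable {n : ℕ} (D : Fin n → Finset σ)

theorem finite_preMax_set {i : ℕ} (hi : i ≤ n) (q : Q) :
    {c : WithBot ℕ | ∃ s : Fin i → σ, (∀ j, s j ∈ D (Fin.castLE hi j)) ∧
      A.run A.q0 (List.ofFn s) = q ∧ (A.cost A.q0 (List.ofFn s) : WithBot ℕ) = c}.Finite :=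
  (Set.finite_setOf_exists_forall_mem (fun j => D (Fin.castLE hi j))
    fun s => (A.cost A.q0 (List.ofFn s) : WithBot ℕ)).subset
      fun _ ⟨s, hs, _, hc⟩ => ⟨s, hs, hc⟩

theorem coe_cost_le_preMax {i : ℕ} (hi : i ≤ n) {s : Fin i → σ}
    (hs : ∀ j, s j ∈ D (Fin.castLE hi j)) :
    (A.cost A.q0 (List.ofFn s) : WithBot ℕ) ≤ A.preMax D i hi (A.run A.q0 (List.ofFn s)) :=
  le_csSup (A.finite_preMax_set D hi _).bddAbove ⟨s, hs, rfl, rfl⟩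

theorem exists_coe_cost_eq_preMax {i : ℕ} (hi : i ≤ n) {q : Q}
    (hq : A.preMax D i hi q ≠ ⊥) :
    ∃ s : Fin i → σ, (∀ j, s j ∈ D (Fin.castLE hi j)) ∧ A.run A.q0 (List.ofFn s) = q ∧
      (A.cost A.q0 (List.ofFn s) : WithBot ℕ) = A.preMax D i hi q := by
  refine Set.Nonempty.csSup_mem ?_ (A.finite_preMax_set D hi q)
  contrapose! hq
  rw [preMax, hq, WithBot.sSup_empty]

theorem finite_sufMax_set (i : ℕ) (q : Q) :
    {c : ℕ | ∃ s : Fin (n - i) → σ,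
      (∀ j : Fin (n - i), s j ∈ D ⟨i + j, by omega⟩) ∧
        A.cost q (List.ofFn s) = c}.Finite :=
  Set.finite_setOf_exists_forall_mem _ _

theorem cost_le_sufMax {i : ℕ} (q : Q) {s : Fin (n - i) → σ}
    (hs : ∀ j : Fin (n - i), s j ∈ D ⟨i + j, by omega⟩) :
    A.cost q (List.ofFn s) ≤ A.sufMax D i q :=
  le_csSup (A.finite_sufMax_set D i q).bddAbove ⟨s, hs, rfl⟩

theorem exists_cost_eq_sufMax (hD : ∀ j, (D j).Nonempty) (i : ℕ) (q : Q) :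
    ∃ s : Fin (n - i) → σ, (∀ j : Fin (n - i), s j ∈ D ⟨i + j, by omega⟩) ∧
      A.cost q (List.ofFn s) = A.sufMax D i q := by
  refine Set.Nonempty.csSup_mem ?_ (A.finite_sufMax_set D i q)
  exact ⟨_, fun j => (hD _).choose, fun j => (hD _).choose_spec, rfl⟩

theorem exists_coe_cost_le_preMax_add_sufMax {s : Fin n → σ} (hs : ∀ j, s j ∈ D j)
    (i : Fin n) : ∃ q, A.preMax D i i.isLt.le q ≠ ⊥ ∧
      (A.cost A.q0 (List.ofFn s) : WithBot ℕ) ≤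
        A.preMax D i i.isLt.le q + (A.δ q (s i)).2 + A.sufMax D (i + 1) (A.δ q (s i)).1 := by
  set u := Fin.take i i.isLt.le s
  set q := A.run A.q0 (List.ofFn u)
  have hpre : (A.cost A.q0 (List.ofFn u) : WithBot ℕ) ≤ A.preMax D i i.isLt.le q :=
    A.coe_cost_le_preMax D i.isLt.le fun j => hs _
  have hsuf : A.cost (A.δ q (s i)).1 (List.ofFn (Fin.suffixAfter s i)) ≤
      A.sufMax D (i + 1) (A.δ q (s i)).1 :=
    A.cost_le_sufMax D _ fun j => hs _
  refine ⟨q, ne_bot_of_le_ne_bot WithBot.coe_ne_bot hpre, ?_⟩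
  rw [Fin.ofFn_eq_take_append_cons i, A.cost_append_cons]
  push_cast
  gcongr

theorem exists_coe_cost_eq_preMax_add_sufMax (hD : ∀ j, (D j).Nonempty) {i : Fin n} {ℓ : σ}
    (hℓ : ℓ ∈ D i) {q : Q} (hq : A.preMax D i i.isLt.le q ≠ ⊥) :
    ∃ s : Fin n → σ, (∀ j, s j ∈ D j) ∧ s i = ℓ ∧
      (A.cost A.q0 (List.ofFn s) : WithBot ℕ) =
        A.preMax D i i.isLt.le q + (A.δ q ℓ).2 + A.sufMax D (i + 1) (A.δ q ℓ).1 := by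
  obtain ⟨u, hu, rfl, hu_cost⟩ := A.exists_coe_cost_eq_preMax D i.isLt.le hq
  obtain ⟨w, hw, hw_cost⟩ :=
    A.exists_cost_eq_sufMax D hD (i + 1) (A.δ (A.run A.q0 (List.ofFn u)) ℓ).1
  refine ⟨Fin.spliceAt i u ℓ w, Fin.spliceAt_mem (t := fun j => D j) i u ℓ w hu hℓ hw,
    Fin.spliceAt_self .., ?_⟩
  rw [Fin.ofFn_spliceAt, A.cost_append_cons, ← hu_cost, ← hw_cost]
  push_cast
  rfl

end CDFA

-- Positions are 0-based: `preMax D i` and `sufMax D (i + 1)` are the paper's `preMax(i−1, ·)`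
-- and `sufMax(i+1, ·)`.
theorem cAutomatonAtLeast_value_support_general {Q σ : Type*} [Fintype Q]
    (A : CDFA Q σ) {n : ℕ} (D : Fin n → Finset σ)
    (hD : ∀ j, (D j).Nonempty) (DN : Finset ℕ) (hDN : DN.Nonempty)
    (i : Fin n) (ℓ : σ) (hℓ : ℓ ∈ D i) :
    (∃ s : Fin n → σ, (∀ j, s j ∈ D j) ∧ s i = ℓ ∧
        ∃ v ∈ DN, v ≤ A.cost A.q0 (List.ofFn s)) ↔
      ((DN.min' hDN : ℕ) : WithBot ℕ) ≤
        (Finset.univ.filter (fun q : Q => A.preMax D i.val i.isLt.le q ≠ ⊥)).sup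
          (fun q => A.preMax D i.val i.isLt.le q + ((A.δ q ℓ).2 : WithBot ℕ) +
            (A.sufMax D (i.val + 1) (A.δ q ℓ).1 : WithBot ℕ)) := by
  constructor
  · rintro ⟨s, hs, rfl, v, hv, hv_le⟩
    obtain ⟨q, hq, hcost⟩ := A.exists_coe_cost_le_preMax_add_sufMax D hs i
    refine le_trans ?_ (Finset.le_sup (Finset.mem_filter.2 ⟨Finset.mem_univ q, hq⟩))
    calc ((DN.min' hDN : ℕ) : WithBot ℕ) ≤ A.cost A.q0 (List.ofFn s) := by
          exact_mod_cast (DN.min'_le v hv).trans hv_le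
      _ ≤ _ := hcost
  · intro h
    obtain ⟨q, hq, hle⟩ := (Finset.le_sup_iff (WithBot.bot_lt_coe _)).1 h
    obtain ⟨s, hs, hsi, hcost⟩ :=
      A.exists_coe_cost_eq_preMax_add_sufMax D hD hℓ (Finset.mem_filter.1 hq).2
    exact ⟨s, hs, hsi, _, DN.min'_mem hDN, by exact_mod_cast hle.trans hcost.ge⟩

/-- Domain-consistency filtering for `cAutomatonAtLeast`: a value `ℓ ∈ Dᵢ` appears in
a solution iff `Max(i,ℓ)`, the maximum of `preMax(i−1,q) + inc + sufMax(i+1,q′)` over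
all states `q` with `preMax(i−1,q) ≠ −∞` (with `δ(q,ℓ) = (q′,inc)`), is at least
`min(D_N)` (positions 0-based). -/
theorem cAutomatonAtLeast_value_support {Q σ : Type*} [Fintype Q] [Fintype σ]
    [DecidableEq Q] (A : CDFA Q σ) {n : ℕ} (D : Fin n → Finset σ)
    (hD : ∀ j, (D j).Nonempty) (DN : Finset ℕ) (hDN : DN.Nonempty)
    (i : Fin n) (ℓ : σ) (hℓ : ℓ ∈ D i) :
    (∃ s : Fin n → σ, (∀ j, s j ∈ D j) ∧ s i = ℓ ∧
        ∃ v ∈ DN, v ≤ A.cost A.q0 (List.ofFn s)) ↔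
      ((DN.min' hDN : ℕ) : WithBot ℕ) ≤
        (Finset.univ.filter (fun q : Q => A.preMax D i.val i.isLt.le q ≠ ⊥)).sup
          (fun q => A.preMax D i.val i.isLt.le q + ((A.δ q ℓ).2 : WithBot ℕ) +
            (A.sufMax D (i.val + 1) (A.δ q ℓ).1 : WithBot ℕ)) :=
  cAutomatonAtLeast_value_support_general A D hD DN hDN i ℓ hℓ
end

section
/- Let a₁,…,a_k and s be natural numbers, and let A be the one-state cDFA over the alphabet Σ = {a₁,…,a_k, 0} whose unique state is both the start state and the target of every transition, where the transition reading symbol v increments the counter by v. Set Dᵢ = {0, aᵢ} for i ∈ [1,k]. Then the Subset-Sum instance ⟨{a₁,…,a_k}, s⟩ has a solution (i.e., there exists A ⊆ {1,…,k} with ∑_{i∈A} aᵢ = s) if and only if the constraint cAutomaton(s, ⟨x₁,…,x_k⟩, A) has a solution, i.e., there exists a string σ = σ₁⋯σ_k with σᵢ ∈ Dᵢ for all i and cost(q0,σ) = s. -/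
/-- The one-state counter-DFA used in the reduction from Subset-Sum: reading a symbol
`v` (a natural number) increments the counter by `v`. -/
def subsetSumCDFA : CDFA Unit ℕ :=
  ⟨(), fun _ v => ((), v)⟩

open Finset

theorem CDFA.cost_eq_sum_of_increment_eq_self {Q : Type*} (A : CDFA Q ℕ)
    (hA : ∀ q v, (A.δ q v).2 = v) (q : Q) (w : List ℕ) : A.cost q w = w.sum := by
  induction w generalizing q with
  | nil => rfl
  | cons v w ih => rw [CDFA.cost, hA, ih, List.sum_cons]

theorem exists_sum_eq_iff_exists_sum_zero_or_eq {ι M : Type*} [Fintype ι] [AddCommMonoid M]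
    (a : ι → M) (s : M) :
    (∃ T : Finset ι, ∑ i ∈ T, a i = s) ↔
      ∃ w : ι → M, (∀ i, w i = 0 ∨ w i = a i) ∧ ∑ i, w i = s := by
  classical
  constructor
  · rintro ⟨T, rfl⟩
    refine ⟨fun i => if i ∈ T then a i else 0, fun i => ?_, ?_⟩
    · by_cases hi : i ∈ T <;> simp [hi]
    · rw [sum_ite_mem, univ_inter]
  · rintro ⟨w, hw, rfl⟩
    refine ⟨univ.filter (fun i => w i = a i), ?_⟩
    rw [sum_filter]
    refine sum_congr rfl fun i _ => ?_
    rcases hw i with h | h <;> simp [h, eq_comm]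

/-- The Subset-Sum reduction: `⟨{a₁,…,a_k}, s⟩` has a solution iff the constraint
`cAutomaton(s, ⟨x₁,…,x_k⟩, A)` with domains `Dᵢ = {0, aᵢ}` has a solution. -/
theorem subsetSum_iff_cAutomaton (k : ℕ) (a : Fin k → ℕ) (s : ℕ) :
    (∃ T : Finset (Fin k), ∑ i ∈ T, a i = s) ↔
      ∃ w : Fin k → ℕ, (∀ i, w i ∈ ({0, a i} : Finset ℕ)) ∧
        subsetSumCDFA.cost subsetSumCDFA.q0 (List.ofFn w) = s := by
  have cost_eq (w : Fin k → ℕ) :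
      subsetSumCDFA.cost subsetSumCDFA.q0 (List.ofFn w) = ∑ i, w i := by
    rw [subsetSumCDFA.cost_eq_sum_of_increment_eq_self (fun _ _ => rfl), List.sum_ofFn]
  simp only [exists_sum_eq_iff_exists_sum_zero_or_eq, cost_eq, mem_insert, mem_singleton]
end
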